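/- arXiv:2508.04863 — 5 statements merged into one kernel-verified Lean document; each statement's English description precedes it below -/
import Mathlib

section
/- Let K = [[k_nn, k_nt],[k_nt, k_tt]] be symmetric positive definite with k_nt ≥ 0, f ≥ 0 a friction coefficient with f·k_nt/k_tt < 1, F ∈ ℝ², w_t ∈ ℝ. For σ ≥ 0, let u(σ) be the minimizer over {v : v_n ≤ 0} of v ↦ (1/2)⟨v,Kv⟩ − ⟨F,v⟩ + σ|v_t − w_t|, let t(σ) = K u(σ) − F, and set P(σ) = −f·t(σ)_n. Then P is a strict contraction on [0,∞): |P(σ₁) − P(σ₂)| ≤ (f·k_nt/k_tt)|σ₁ − σ₂|, and hence the discrete incremental friction problem has a unique solution. -/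
/-!
A minimiser of the energy with slip threshold `σ` satisfies the Tresca contact conditions
(first-order optimality along admissible directions). For two thresholds these conditions are
monotone: with `d = u₁ - u₂` and `K d = (p, q)` they give `d₁ p ≤ 0` and
`q d₂ ≤ |σ₁ - σ₂| |d₂|`, and eliminating `d` through `K⁻¹` (using `k_nt ≥ 0`) yields
`|p| ≤ (k_nt / k_tt) |σ₁ - σ₂|`. So `P` is a contraction of `[0, ∞)`, and its fixed point gives a
solution. Conversely a solution `(u, t)` satisfies the Tresca conditions for `σ = -f t_n`; these
determine `u` (the quadratic form of `K` is definite), so `σ` is a fixed point of `P`.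
-/

open Filter Topology Set

/-- Solution of the discrete incremental friction problem with stiffness
`K = [[knn, knt],[knt, ktt]]`, friction coefficient `f`, force `F` and
previous tangential displacement `wt`. -/
def IncSol (knn knt ktt f wt : ℝ) (F u t : ℝ × ℝ) : Prop :=
  knn * u.1 + knt * u.2 = F.1 + t.1 ∧
  knt * u.1 + ktt * u.2 = F.2 + t.2 ∧
  u.1 ≤ 0 ∧ t.1 ≤ 0 ∧ u.1 * t.1 = 0 ∧
  |t.2| ≤ -f * t.1 ∧ t.2 * (u.2 - wt) = f * t.1 * |u.2 - wt|

lemma nonneg_of_forall_mul_add_sq_mul_nonneg {c k ε : ℝ} (hε : 0 < ε)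
    (h : ∀ s ∈ Ioc 0 ε, 0 ≤ s * c + s ^ 2 * k) : 0 ≤ c := by
  have hlim : Tendsto (fun s => c + s * k) (𝓝[>] 0) (𝓝 c) := by
    have : Continuous fun s : ℝ => c + s * k := by fun_prop
    simpa using (this.tendsto 0).mono_left nhdsWithin_le_nhds
  refine ge_of_tendsto hlim ?_
  filter_upwards [Ioo_mem_nhdsGT hε] with s hs
  have hsc := h s (Ioo_subset_Ioc_self hs)
  have hs0 : 0 < s := hs.1
  nlinarith

lemma exists_unique_fixedPoint_of_abs_sub_le {g : ℝ → ℝ} {c : ℝ} (hc : c < 1)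
    (hg : ∀ x, 0 ≤ x → 0 ≤ g x)
    (hlip : ∀ x y, 0 ≤ x → 0 ≤ y → |g x - g y| ≤ c * |x - y|) :
    ∃! x, 0 ≤ x ∧ g x = x := by
  have hc' : (c.toNNReal : ℝ) < 1 := by simpa [Real.coe_toNNReal'] using hc
  have hcontr : ContractingWith c.toNNReal (fun x => g (max x 0)) := by
    refine ⟨by exact_mod_cast hc', LipschitzWith.of_dist_le_mul fun x y => ?_⟩
    simp only [Real.dist_eq, Real.coe_toNNReal']
    calc |g (max x 0) - g (max y 0)| ≤ c * |max x 0 - max y 0| :=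
          hlip _ _ (le_max_right _ _) (le_max_right _ _)
      _ ≤ max c 0 * |x - y| :=
          mul_le_mul (le_max_left _ _) (abs_max_sub_max_le_abs _ _ _) (abs_nonneg _)
            (le_max_right _ _)
  obtain ⟨x, hx, -⟩ := hcontr.exists_fixedPoint 0 (edist_ne_top _ _)
  have hx0 : 0 ≤ x := hx ▸ hg _ (le_max_right _ _)
  have hgx : g x = x := by
    have h : g (max x 0) = x := hx
    rwa [max_eq_left hx0] at h
  refine ⟨x, ⟨hx0, hgx⟩, fun y ⟨hy0, hgy⟩ => ?_⟩
  have hxy := hlip y x hy0 hx0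
  rw [hgy, hgx] at hxy
  have : |y - x| = 0 := by nlinarith [abs_nonneg (y - x)]
  exact sub_eq_zero.mp (abs_eq_zero.mp this)

lemma normal_le_of_monotone {knn knt ktt δ d₁ d₂ : ℝ} (hknt : 0 ≤ knt) (hktt : 0 < ktt)
    (hdet : 0 < knn * ktt - knt ^ 2) (hδ : 0 ≤ δ)
    (hn : d₁ * (knn * d₁ + knt * d₂) ≤ 0) (ht : (knt * d₁ + ktt * d₂) * d₂ ≤ δ * |d₂|) :
    knn * d₁ + knt * d₂ ≤ knt / ktt * δ := by
  set p := knn * d₁ + knt * d₂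
  set q := knt * d₁ + ktt * d₂
  rcases le_or_gt p 0 with hp | hp
  · exact hp.trans (by positivity)
  have hpq : ktt * p ≤ knt * q := by
    have : (knn * ktt - knt ^ 2) * d₁ = ktt * p - knt * q := by ring
    nlinarith [mul_nonpos_of_nonneg_of_nonpos hdet.le hn]
  have hq : 0 < q := by
    by_contra! hq
    nlinarith [mul_nonpos_of_nonneg_of_nonpos hknt hq]
  have hd₂ : 0 < d₂ := by
    have hdet_d₂ : (knn * ktt - knt ^ 2) * d₂ = knn * q - knt * p := by ring
    have : 0 < knn * q - knt * p := by
      by_contra! h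
      nlinarith [mul_le_mul_of_nonneg_left hpq hknt, mul_pos hdet hq,
        mul_nonpos_of_nonneg_of_nonpos hktt.le h]
    exact pos_of_mul_pos_right (hdet_d₂ ▸ this) hdet.le
  have hqδ : q ≤ δ := by
    rw [abs_of_pos hd₂] at ht
    exact le_of_mul_le_mul_right ht hd₂
  rw [div_mul_eq_mul_div, le_div_iff₀ hktt]
  nlinarith [mul_le_mul_of_nonneg_left hqδ hknt]

lemma abs_normal_le_of_monotone {knn knt ktt δ d₁ d₂ : ℝ} (hknt : 0 ≤ knt) (hktt : 0 < ktt)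
    (hdet : 0 < knn * ktt - knt ^ 2) (hδ : 0 ≤ δ)
    (hn : d₁ * (knn * d₁ + knt * d₂) ≤ 0) (ht : (knt * d₁ + ktt * d₂) * d₂ ≤ δ * |d₂|) :
    |knn * d₁ + knt * d₂| ≤ knt / ktt * δ := by
  refine abs_le.mpr ⟨?_, normal_le_of_monotone hknt hktt hdet hδ hn ht⟩
  have := normal_le_of_monotone (d₁ := -d₁) (d₂ := -d₂) hknt hktt hdet hδ
    (by linarith) (by rw [abs_neg]; linarith)
  linarith

lemma eq_zero_of_quadForm_nonpos {knn knt ktt d₁ d₂ : ℝ} (hktt : 0 < ktt)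
    (hdet : 0 < knn * ktt - knt ^ 2)
    (h : knn * d₁ ^ 2 + 2 * knt * d₁ * d₂ + ktt * d₂ ^ 2 ≤ 0) : d₁ = 0 ∧ d₂ = 0 := by
  have hsq : ktt * (knn * d₁ ^ 2 + 2 * knt * d₁ * d₂ + ktt * d₂ ^ 2)
      = (knn * ktt - knt ^ 2) * d₁ ^ 2 + (knt * d₁ + ktt * d₂) ^ 2 := by ring
  have hQ := mul_nonpos_of_nonneg_of_nonpos hktt.le h
  have h₁ : d₁ ^ 2 = 0 := by
    nlinarith [sq_nonneg d₁, sq_nonneg (knt * d₁ + ktt * d₂), mul_nonneg hdet.le (sq_nonneg d₁)]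
  have h₂ : (knt * d₁ + ktt * d₂) ^ 2 = 0 := by
    nlinarith [sq_nonneg (knt * d₁ + ktt * d₂), mul_nonneg hdet.le (sq_nonneg d₁)]
  have h₁ := pow_eq_zero_iff two_ne_zero |>.mp h₁
  have h₂ := pow_eq_zero_iff two_ne_zero |>.mp h₂
  rw [h₁, mul_zero, zero_add] at h₂
  exact ⟨h₁, (mul_eq_zero.mp h₂).resolve_left hktt.ne'⟩

noncomputable section

variable (knn knt ktt Fn Ft : ℝ)

def contactEnergy (wt σ : ℝ) (v : ℝ × ℝ) : ℝ :=
  (1/2) * (knn * v.1 ^ 2 + 2 * knt * v.1 * v.2 + ktt * v.2 ^ 2)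
    - (Fn * v.1 + Ft * v.2) + σ * |v.2 - wt|

def contactReaction (v : ℝ × ℝ) : ℝ × ℝ :=
  (knn * v.1 + knt * v.2 - Fn, knt * v.1 + ktt * v.2 - Ft)

/-- Components `.1` and `.2` are normal and tangential: unilateral contact in the normal
direction, Tresca friction with slip threshold `σ` in the tangential one. -/
def TrescaContact (σ wt : ℝ) (u t : ℝ × ℝ) : Prop :=
  u.1 ≤ 0 ∧ t.1 ≤ 0 ∧ u.1 * t.1 = 0 ∧ |t.2| ≤ σ ∧ t.2 * (u.2 - wt) = -σ * |u.2 - wt|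

lemma contactEnergy_add_smul_sub (wt σ s : ℝ) (u e : ℝ × ℝ) :
    contactEnergy knn knt ktt Fn Ft wt σ (u.1 + s * e.1, u.2 + s * e.2)
      - contactEnergy knn knt ktt Fn Ft wt σ u
    = s * ((contactReaction knn knt ktt Fn Ft u).1 * e.1
        + (contactReaction knn knt ktt Fn Ft u).2 * e.2)
      + s ^ 2 * ((knn * e.1 ^ 2 + 2 * knt * e.1 * e.2 + ktt * e.2 ^ 2) / 2)
      + σ * (|u.2 + s * e.2 - wt| - |u.2 - wt|) := by
  simp only [contactEnergy, contactReaction]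
  ring

variable {knn knt ktt Fn Ft}

/-- `c` bounds the right derivative of `s ↦ |u.2 + s * e.2 - wt|` at `0`. -/
lemma IsMinOn.contactEnergy_firstOrder {wt σ ε c : ℝ} {u e : ℝ × ℝ} (hσ : 0 ≤ σ)
    (hmin : IsMinOn (contactEnergy knn knt ktt Fn Ft wt σ) {v | v.1 ≤ 0} u) (hε : 0 < ε)
    (hadm : ∀ s ∈ Ioc 0 ε, u.1 + s * e.1 ≤ 0)
    (habs : ∀ s ∈ Ioc 0 ε, |u.2 + s * e.2 - wt| ≤ |u.2 - wt| + s * c) :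
    0 ≤ (contactReaction knn knt ktt Fn Ft u).1 * e.1
      + (contactReaction knn knt ktt Fn Ft u).2 * e.2 + σ * c := by
  refine nonneg_of_forall_mul_add_sq_mul_nonneg
    (k := (knn * e.1 ^ 2 + 2 * knt * e.1 * e.2 + ktt * e.2 ^ 2) / 2) hε fun s hs => ?_
  have hle := isMinOn_iff.mp hmin (u.1 + s * e.1, u.2 + s * e.2) (hadm s hs)
  have hdiff := contactEnergy_add_smul_sub knn knt ktt Fn Ft wt σ s u e
  have := mul_le_mul_of_nonneg_left (habs s hs) hσ
  linarith

lemma IsMinOn.trescaContact {wt σ : ℝ} {u : ℝ × ℝ} (hσ : 0 ≤ σ) (hu : u.1 ≤ 0)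
    (hmin : IsMinOn (contactEnergy knn knt ktt Fn Ft wt σ) {v | v.1 ≤ 0} u) :
    TrescaContact σ wt u (contactReaction knn knt ktt Fn Ft u) := by
  set t := contactReaction knn knt ktt Fn Ft u
  have htangent (e : ℝ) (s : ℝ) (hs : s ∈ Ioc 0 1) :
      |u.2 + s * e - wt| ≤ |u.2 - wt| + s * |e| := by
    calc |u.2 + s * e - wt| = |(u.2 - wt) + s * e| := by ring_nf
      _ ≤ |u.2 - wt| + |s * e| := abs_add_le _ _
      _ = |u.2 - wt| + s * |e| := by rw [abs_mul, abs_of_pos hs.1]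
  have hnormal : 0 ≤ -t.1 := by
    simpa using hmin.contactEnergy_firstOrder (e := (-1, 0)) (c := 0) hσ one_pos
      (fun s hs => by simp only; linarith [hs.1]) (fun s _ => by simp)
  have hcompl : 0 ≤ t.1 * -u.1 := by
    simpa using hmin.contactEnergy_firstOrder (e := (-u.1, 0)) (c := 0) hσ one_pos
      (fun s hs => by simp only; nlinarith [hs.2]) (fun s _ => by simp)
  have hup : 0 ≤ t.2 + σ := by
    simpa using hmin.contactEnergy_firstOrder (e := (0, 1)) (c := 1) hσ one_pos
      (fun s _ => by simpa using hu) (fun s hs => by simpa using htangent 1 s hs)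
  have hdown : 0 ≤ -t.2 + σ := by
    simpa using hmin.contactEnergy_firstOrder (e := (0, -1)) (c := 1) hσ one_pos
      (fun s _ => by simpa using hu) (fun s hs => by simpa using htangent (-1) s hs)
  have hslip : 0 ≤ t.2 * -(u.2 - wt) + σ * -|u.2 - wt| := by
    simpa using hmin.contactEnergy_firstOrder (e := (0, -(u.2 - wt))) (c := -|u.2 - wt|) hσ
      one_pos (fun s _ => by simpa using hu) fun s hs => by
        have : u.2 + s * -(u.2 - wt) - wt = (1 - s) * (u.2 - wt) := by ring
        rw [this, abs_mul, abs_of_nonneg (by linarith [hs.2])]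
        linarith
  have habs : |t.2| ≤ σ := abs_le.mpr ⟨by linarith, by linarith⟩
  refine ⟨hu, by linarith, by nlinarith, habs, le_antisymm (by linarith) ?_⟩
  calc -σ * |u.2 - wt| ≤ -(|t.2| * |u.2 - wt|) := by
        nlinarith [mul_le_mul_of_nonneg_right habs (abs_nonneg (u.2 - wt))]
    _ = -|t.2 * (u.2 - wt)| := by rw [abs_mul]
    _ ≤ t.2 * (u.2 - wt) := neg_abs_le _

lemma TrescaContact.normal_monotone {σ₁ σ₂ wt : ℝ} {u₁ u₂ t₁ t₂ : ℝ × ℝ}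
    (h₁ : TrescaContact σ₁ wt u₁ t₁) (h₂ : TrescaContact σ₂ wt u₂ t₂) :
    (u₁.1 - u₂.1) * (t₁.1 - t₂.1) ≤ 0 := by
  obtain ⟨hu₁, ht₁, hc₁, -⟩ := h₁
  obtain ⟨hu₂, ht₂, hc₂, -⟩ := h₂
  nlinarith [mul_nonneg_of_nonpos_of_nonpos hu₁ ht₂, mul_nonneg_of_nonpos_of_nonpos hu₂ ht₁]

lemma TrescaContact.tangential_monotone {σ₁ σ₂ wt : ℝ} {u₁ u₂ t₁ t₂ : ℝ × ℝ}
    (h₁ : TrescaContact σ₁ wt u₁ t₁) (h₂ : TrescaContact σ₂ wt u₂ t₂) :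
    (t₁.2 - t₂.2) * (u₁.2 - u₂.2) ≤ |σ₁ - σ₂| * |u₁.2 - u₂.2| := by
  obtain ⟨-, -, -, hs₁, he₁⟩ := h₁
  obtain ⟨-, -, -, hs₂, he₂⟩ := h₂
  have hcross (σ : ℝ) (t x : ℝ) (hs : |t| ≤ σ) : -(t * x) ≤ σ * |x| :=
    calc -(t * x) ≤ |t| * |x| := by rw [← abs_mul]; exact neg_le_abs _
      _ ≤ σ * |x| := mul_le_mul_of_nonneg_right hs (abs_nonneg x)
  have hdist : |(|u₁.2 - wt| - |u₂.2 - wt|)| ≤ |u₁.2 - u₂.2| := by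
    simpa using abs_abs_sub_abs_le_abs_sub (u₁.2 - wt) (u₂.2 - wt)
  calc (t₁.2 - t₂.2) * (u₁.2 - u₂.2)
      = t₁.2 * (u₁.2 - wt) + t₂.2 * (u₂.2 - wt) - t₁.2 * (u₂.2 - wt) - t₂.2 * (u₁.2 - wt) := by
        ring
    _ ≤ (σ₂ - σ₁) * (|u₁.2 - wt| - |u₂.2 - wt|) := by
        rw [he₁, he₂]
        linarith [hcross σ₁ t₁.2 (u₂.2 - wt) hs₁, hcross σ₂ t₂.2 (u₁.2 - wt) hs₂]
    _ ≤ |σ₂ - σ₁| * |(|u₁.2 - wt| - |u₂.2 - wt|)| := by rw [← abs_mul]; exact le_abs_self _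
    _ ≤ |σ₁ - σ₂| * |u₁.2 - u₂.2| := by
        rw [abs_sub_comm σ₂]; exact mul_le_mul_of_nonneg_left hdist (abs_nonneg _)

lemma contactReaction_fst_sub (u₁ u₂ : ℝ × ℝ) :
    (contactReaction knn knt ktt Fn Ft u₁).1 - (contactReaction knn knt ktt Fn Ft u₂).1
      = knn * (u₁.1 - u₂.1) + knt * (u₁.2 - u₂.2) := by
  simp only [contactReaction]; ring

lemma contactReaction_snd_sub (u₁ u₂ : ℝ × ℝ) :
    (contactReaction knn knt ktt Fn Ft u₁).2 - (contactReaction knn knt ktt Fn Ft u₂).2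
      = knt * (u₁.1 - u₂.1) + ktt * (u₁.2 - u₂.2) := by
  simp only [contactReaction]; ring

lemma TrescaContact.abs_reaction_sub_le (hknt : 0 ≤ knt) (hktt : 0 < ktt)
    (hdet : 0 < knn * ktt - knt ^ 2) {σ₁ σ₂ wt : ℝ} {u₁ u₂ : ℝ × ℝ}
    (h₁ : TrescaContact σ₁ wt u₁ (contactReaction knn knt ktt Fn Ft u₁))
    (h₂ : TrescaContact σ₂ wt u₂ (contactReaction knn knt ktt Fn Ft u₂)) :
    |(contactReaction knn knt ktt Fn Ft u₁).1 - (contactReaction knn knt ktt Fn Ft u₂).1|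
      ≤ knt / ktt * |σ₁ - σ₂| := by
  have hn := h₁.normal_monotone h₂
  have ht := h₁.tangential_monotone h₂
  rw [contactReaction_fst_sub] at hn ⊢
  rw [contactReaction_snd_sub] at ht
  exact abs_normal_le_of_monotone hknt hktt hdet (abs_nonneg _) hn ht

lemma TrescaContact.eq_of_reaction (hktt : 0 < ktt) (hdet : 0 < knn * ktt - knt ^ 2)
    {σ wt : ℝ} {u₁ u₂ : ℝ × ℝ}
    (h₁ : TrescaContact σ wt u₁ (contactReaction knn knt ktt Fn Ft u₁))
    (h₂ : TrescaContact σ wt u₂ (contactReaction knn knt ktt Fn Ft u₂)) : u₁ = u₂ := by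
  have hn := h₁.normal_monotone h₂
  have ht := h₁.tangential_monotone h₂
  rw [contactReaction_fst_sub] at hn
  rw [contactReaction_snd_sub, sub_self, abs_zero, zero_mul] at ht
  obtain ⟨h₁, h₂⟩ := eq_zero_of_quadForm_nonpos hktt hdet (d₁ := u₁.1 - u₂.1)
    (d₂ := u₁.2 - u₂.2) (by linarith)
  exact Prod.ext (sub_eq_zero.mp h₁) (sub_eq_zero.mp h₂)

lemma incSol_iff {knn knt ktt f wt Fn Ft : ℝ} {u t : ℝ × ℝ} :
    IncSol knn knt ktt f wt (Fn, Ft) u t ↔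
      t = contactReaction knn knt ktt Fn Ft u ∧ TrescaContact (-f * t.1) wt u t := by
  constructor
  · rintro ⟨hn, ht, hu, htn, hc, hs, he⟩
    refine ⟨Prod.ext ?_ ?_, hu, htn, hc, hs, by rw [he]; ring⟩ <;>
      simp only [contactReaction] <;> linarith
  · rintro ⟨rfl, hu, htn, hc, hs, he⟩
    refine ⟨?_, ?_, hu, htn, hc, hs, by rw [he]; ring⟩ <;> simp only [contactReaction] <;> ring

end

theorem stmt2_general (knn knt ktt f Fn Ft wt : ℝ)
    (hknt : 0 ≤ knt) (hktt : 0 < ktt)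
    (hdet : 0 < knn * ktt - knt ^ 2) (hf : 0 ≤ f) (hsmall : f * knt / ktt < 1)
    (u : ℝ → ℝ × ℝ) (t : ℝ → ℝ × ℝ) (P : ℝ → ℝ)
    (hu : ∀ σ : ℝ, 0 ≤ σ → (u σ).1 ≤ 0 ∧ ∀ v : ℝ × ℝ, v.1 ≤ 0 →
      (1/2) * (knn * (u σ).1 ^ 2 + 2 * knt * (u σ).1 * (u σ).2 + ktt * (u σ).2 ^ 2)
        - (Fn * (u σ).1 + Ft * (u σ).2) + σ * |(u σ).2 - wt|
      ≤ (1/2) * (knn * v.1 ^ 2 + 2 * knt * v.1 * v.2 + ktt * v.2 ^ 2)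
        - (Fn * v.1 + Ft * v.2) + σ * |v.2 - wt|)
    (ht : ∀ σ : ℝ, t σ = (knn * (u σ).1 + knt * (u σ).2 - Fn,
                          knt * (u σ).1 + ktt * (u σ).2 - Ft))
    (hP : ∀ σ : ℝ, P σ = -f * (t σ).1) :
    (∀ σ₁ σ₂ : ℝ, 0 ≤ σ₁ → 0 ≤ σ₂ →
      |P σ₁ - P σ₂| ≤ (f * knt / ktt) * |σ₁ - σ₂|) ∧
    ∃! p : (ℝ × ℝ) × (ℝ × ℝ), IncSol knn knt ktt f wt (Fn, Ft) p.1 p.2 := by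
  have ht' (σ : ℝ) : t σ = contactReaction knn knt ktt Fn Ft (u σ) := ht σ
  have hTresca (σ : ℝ) (hσ : 0 ≤ σ) :
      TrescaContact σ wt (u σ) (contactReaction knn knt ktt Fn Ft (u σ)) :=
    IsMinOn.trescaContact hσ (hu σ hσ).1 (isMinOn_iff.mpr (hu σ hσ).2)
  have hthreshold {τ : ℝ} (hτ : τ ≤ 0) : 0 ≤ -f * τ :=
    mul_nonneg_of_nonpos_of_nonpos (neg_nonpos.mpr hf) hτ
  have hcontr (σ₁ σ₂ : ℝ) (h₁ : 0 ≤ σ₁) (h₂ : 0 ≤ σ₂) :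
      |P σ₁ - P σ₂| ≤ f * knt / ktt * |σ₁ - σ₂| := by
    rw [hP, hP, ht', ht', ← mul_sub, abs_mul, abs_neg, abs_of_nonneg hf, mul_div_assoc,
      mul_assoc]
    exact mul_le_mul_of_nonneg_left
      ((hTresca σ₁ h₁).abs_reaction_sub_le hknt hktt hdet (hTresca σ₂ h₂)) hf
  obtain ⟨y, ⟨hy, hPy⟩, hy_unique⟩ := exists_unique_fixedPoint_of_abs_sub_le hsmall
    (fun σ hσ => by rw [hP, ht']; exact hthreshold (hTresca σ hσ).2.1) hcontr
  refine ⟨hcontr, ⟨(u y, t y), incSol_iff.mpr ⟨ht' y, ?_⟩, ?_⟩⟩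
  · rw [← hP, hPy, ht']
    exact hTresca y hy
  · rintro ⟨u', t'⟩ hsol
    obtain ⟨hrt, hT⟩ := incSol_iff.mp hsol
    dsimp only at hrt hT
    subst hrt
    set σ := -f * (contactReaction knn knt ktt Fn Ft u').1
    have hσ : 0 ≤ σ := hthreshold hT.2.1
    have hu' : u σ = u' := (hTresca σ hσ).eq_of_reaction hktt hdet hT
    have hσy : σ = y := hy_unique σ ⟨hσ, by rw [hP, ht', hu']⟩
    rw [← hσy, hu', ht', hu']

/-- under `f·k_nt/k_tt < 1`, the map `P(σ) = −f t(σ)_n` is a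
strict contraction with constant `f·k_nt/k_tt`, and the discrete incremental
problem has a unique solution. -/
theorem stmt2 (knn knt ktt f Fn Ft wt : ℝ)
    (hknt : 0 ≤ knt) (hknn : 0 < knn) (hktt : 0 < ktt)
    (hdet : 0 < knn * ktt - knt ^ 2) (hf : 0 ≤ f) (hsmall : f * knt / ktt < 1)
    (u : ℝ → ℝ × ℝ) (t : ℝ → ℝ × ℝ) (P : ℝ → ℝ)
    (hu : ∀ σ : ℝ, 0 ≤ σ → (u σ).1 ≤ 0 ∧ ∀ v : ℝ × ℝ, v.1 ≤ 0 →
      (1/2) * (knn * (u σ).1 ^ 2 + 2 * knt * (u σ).1 * (u σ).2 + ktt * (u σ).2 ^ 2)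
        - (Fn * (u σ).1 + Ft * (u σ).2) + σ * |(u σ).2 - wt|
      ≤ (1/2) * (knn * v.1 ^ 2 + 2 * knt * v.1 * v.2 + ktt * v.2 ^ 2)
        - (Fn * v.1 + Ft * v.2) + σ * |v.2 - wt|)
    (ht : ∀ σ : ℝ, t σ = (knn * (u σ).1 + knt * (u σ).2 - Fn,
                          knt * (u σ).1 + ktt * (u σ).2 - Ft))
    (hP : ∀ σ : ℝ, P σ = -f * (t σ).1) :
    (∀ σ₁ σ₂ : ℝ, 0 ≤ σ₁ → 0 ≤ σ₂ →
      |P σ₁ - P σ₂| ≤ (f * knt / ktt) * |σ₁ - σ₂|) ∧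
    ∃! p : (ℝ × ℝ) × (ℝ × ℝ), IncSol knn knt ktt f wt (Fn, Ft) p.1 p.2 :=
  stmt2_general knn knt ktt f Fn Ft wt hknt hktt hdet hf hsmall u t P hu ht hP
end

section
/- Let K = [[k_nn, k_nt],[k_nt, k_tt]] be symmetric positive definite with k_nt > 0, and let f = k_tt/k_nt. Then there exists F ∈ ℝ² such that the discrete incremental problem with w_t = 0 admits a continuum of solutions: for any F with F_t > 0 and F_n = (k_nt/k_tt)F_t, every t_n ∈ [−k_nt F_t/k_tt, 0] with t_t = f t_n and u = K⁻¹(F + t) gives a solution. -/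
/-- for `f = k_tt/k_nt` the discrete incremental problem with
`w_t = 0` admits a continuum of solutions: for any `F` with `F_t > 0` and
`F_n = (k_nt/k_tt)·F_t`, every `t_n ∈ [−k_nt F_t/k_tt, 0]` with `t_t = f·t_n`
and `u = K⁻¹(F + t)` gives a solution. -/
theorem stmt3 (knn knt ktt : ℝ)
    (hknt : 0 < knt) (hknn : 0 < knn) (hktt : 0 < ktt)
    (hdet : 0 < knn * ktt - knt ^ 2) (f : ℝ) (hf : f = ktt / knt) :
    ∀ Fn Ft : ℝ, 0 < Ft → Fn = knt * Ft / ktt →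
      ∀ tn : ℝ, -(knt * Ft / ktt) ≤ tn → tn ≤ 0 →
        ∃ u : ℝ × ℝ, IncSol knn knt ktt f 0 (Fn, Ft) u (tn, f * tn) := by
  intro Fn Ft hFt hFn tn htn1 htn2
  refine ⟨(0, Ft / ktt + tn / knt), ?_, ?_, le_refl 0, htn2, by ring, ?_, ?_⟩
  · simp only
    rw [hFn]
    field_simp
    ring
  · simp only
    rw [hf]
    field_simp
    ring
  · have hfpos : 0 < f := hf ▸ div_pos hktt hknt
    rw [abs_of_nonpos (mul_nonpos_of_nonneg_of_nonpos hfpos.le htn2)]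
    ring_nf
    exact le_refl _
  · have hu2 : 0 ≤ Ft / ktt + tn / knt := by
      have h0 : 0 ≤ knt * Ft / ktt + tn := by linarith
      have heq : Ft / ktt + tn / knt = (knt * Ft / ktt + tn) / knt := by
        field_simp
      rw [heq]
      exact div_nonneg h0 hknt.le
    show f * tn * (Ft / ktt + tn / knt - 0) = f * tn * |Ft / ktt + tn / knt - 0|
    rw [sub_zero, abs_of_nonneg hu2]
end

section
/- Let K = [[k_nn,k_nt],[k_nt,k_tt]] be symmetric positive definite with k_nt > 0 and let f ≥ k_tt/k_nt, R > 0. Define F : [0,2] → ℝ² by F(s) = (sR/f, sR) for s ∈ [0,1] and F(s) = (R/f + (s−1), R + (f+1)(s−1)) for s ∈ [1,2]. Define u(s) = 0 for s ∈ [0,1) and, for s ∈ [1,2], u(s) = ( (R(k_tt/f − k_nt) + [k_tt − k_nt(f+1)](s−1)) / D , (R(k_nn − k_nt/f) + [k_nn(f+1) − k_nt](s−1)) / D ) with D = k_nn k_tt − k_nt², and t(s) = −F(s) for s ∈ [0,1), t(s) = 0 for s ∈ [1,2]. Then for every s ∈ [0,2]: K u(s) = F(s) + t(s), u_n(s) ≤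 0, t_n(s) ≤ 0, u_n(s)·t_n(s) = 0, and |t_t(s)| ≤ −f·t_n(s); moreover u jumps at s = 1 (u(1−) = 0 ≠ u(1)). -/
/-!
For `s < 1` the contact sticks: `u = 0` and the reaction `t = -F` lies on the boundary of the
Coulomb cone, since `|F_t| = f F_n` along the loading path. For `s ≥ 1` the contact opens and
`u = K⁻¹ F` by Cramer's rule; its normal component is nonpositive because `f ≥ k_tt / k_nt`
makes both coefficients of its numerator nonpositive. At `s = 1` the tangential component is
`R (k_nn - k_nt / f) / D > 0`, because `k_nt / f ≤ k_nt² / k_tt < k_nn`.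
-/

theorem cramer_two_by_two_symm {K : Type*} [Field K] {knn knt ktt a b x y : K}
    (hD : knn * ktt - knt ^ 2 ≠ 0)
    (hx : x = (ktt * a - knt * b) / (knn * ktt - knt ^ 2))
    (hy : y = (knn * b - knt * a) / (knn * ktt - knt ^ 2)) :
    knn * x + knt * y = a ∧ knt * x + ktt * y = b := by
  subst hx hy
  constructor <;> rw [mul_div_assoc', mul_div_assoc', ← add_div, div_eq_iff hD] <;> ring

theorem slip_normal_numerator_nonpos {knt ktt f R s : ℝ} (hknt : 0 < knt) (hf0 : 0 < f)
    (hfk : ktt ≤ f * knt) (hR : 0 ≤ R) (hs : 1 ≤ s) :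
    R * (ktt / f - knt) + (ktt - knt * (f + 1)) * (s - 1) ≤ 0 := by
  have hconst : ktt / f - knt ≤ 0 := by
    rw [sub_nonpos, div_le_iff₀ hf0]
    linarith
  have hslope : ktt - knt * (f + 1) ≤ 0 := by linarith
  exact add_nonpos (mul_nonpos_of_nonneg_of_nonpos hR hconst)
    (mul_nonpos_of_nonpos_of_nonneg hslope (sub_nonneg.2 hs))

theorem div_lt_of_sq_lt_mul {knn knt ktt f : ℝ} (hknn : 0 < knn) (hknt : 0 < knt)
    (hf0 : 0 < f) (hdet : 0 < knn * ktt - knt ^ 2) (hfk : ktt ≤ f * knt) :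
    knt / f < knn := by
  rw [div_lt_iff₀ hf0]
  nlinarith [mul_le_mul_of_nonneg_left hfk hknn.le]

/-- an explicit jumping solution of the discrete quasi-static
problem under Lipschitz load, for `f ≥ k_tt/k_nt`. -/
theorem stmt4 (knn knt ktt f R : ℝ)
    (hknn : 0 < knn) (hknt : 0 < knt) (hktt : 0 < ktt)
    (hdet : 0 < knn * ktt - knt ^ 2)
    (hf : ktt / knt ≤ f) (hR : 0 < R)
    (D : ℝ) (hD : D = knn * ktt - knt ^ 2)
    (F u t : ℝ → ℝ × ℝ)
    (hF : ∀ s : ℝ, F s = if s < 1 then (s * R / f, s * R)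
        else (R / f + (s - 1), R + (f + 1) * (s - 1)))
    (hu : ∀ s : ℝ, u s = if s < 1 then (0, 0)
        else ((R * (ktt / f - knt) + (ktt - knt * (f + 1)) * (s - 1)) / D,
              (R * (knn - knt / f) + (knn * (f + 1) - knt) * (s - 1)) / D))
    (ht : ∀ s : ℝ, t s = if s < 1 then (-(s * R / f), -(s * R)) else (0, 0)) :
    (∀ s : ℝ, 0 ≤ s → s ≤ 2 →
      (knn * (u s).1 + knt * (u s).2 = (F s).1 + (t s).1 ∧
       knt * (u s).1 + ktt * (u s).2 = (F s).2 + (t s).2) ∧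
      (u s).1 ≤ 0 ∧ (t s).1 ≤ 0 ∧ (u s).1 * (t s).1 = 0 ∧
      |(t s).2| ≤ -f * (t s).1) ∧
    u 1 ≠ (0, 0) := by
  subst hD
  have hf0 : 0 < f := (div_pos hktt hknt).trans_le hf
  have hfk : ktt ≤ f * knt := (div_le_iff₀ hknt).mp hf
  refine ⟨fun s hs0 _ => ?_, ?_⟩
  · rcases lt_or_ge s 1 with hstick | hslip
    · simp only [hu s, ht s, hF s, if_pos hstick]
      have hload : 0 ≤ s * R := mul_nonneg hs0 hR.le
      have hcone : -f * -(s * R / f) = s * R := by field_simp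
      refine ⟨⟨by ring, by ring⟩, le_rfl, ?_, by ring, ?_⟩
      · exact neg_nonpos.2 (div_nonneg hload hf0.le)
      · rw [abs_neg, abs_of_nonneg hload, hcone]
    · simp only [hu s, ht s, hF s, if_neg hslip.not_gt, add_zero]
      refine ⟨cramer_two_by_two_symm hdet.ne' (by ring) (by ring), ?_, le_rfl, by ring, by simp⟩
      exact div_nonpos_of_nonpos_of_nonneg
        (slip_normal_numerator_nonpos hknt hf0 hfk hR.le hslip) hdet.le
  · simp only [hu 1, lt_irrefl, if_false, sub_self, mul_zero, add_zero]
    have htangential : 0 < R * (knn - knt / f) / (knn * ktt - knt ^ 2) :=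
      div_pos (mul_pos hR (sub_pos.2 (div_lt_of_sq_lt_mul hknn hknt hf0 hdet hfk))) hdet
    exact fun h => htangential.ne' (congrArg Prod.snd h)
end

section
/- Let K be a 2×2 symmetric positive definite matrix with k_nt ≥ 0 and f ≥ 0 with f·k_nt/k_tt < 1. Let (F_i) be a finite sequence in ℝ² and define inductively u_i as the unique solution of the discrete incremental problem with force F_i and previous tangential displacement w_t = u_{i−1,t} (starting from an admissible u₀ for F₀). Then there is a constant C > 0 depending only on f and K such that |u_i − u_{i−1}| ≤ C |F_i − F_{i−1}| for all i. -/
lemma aux_min0_lip (x y : ℝ) : |min x 0 - min y 0| ≤ |x - y| := by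
  rcases le_total x 0 with hx | hx <;> rcases le_total y 0 with hy | hy
  · rw [min_eq_left hx, min_eq_left hy]
  · rw [min_eq_left hx, min_eq_right hy, sub_zero, abs_of_nonpos hx]
    linarith [neg_le_abs (x - y)]
  · rw [min_eq_right hx, min_eq_left hy, zero_sub, abs_neg, abs_of_nonpos hy]
    linarith [le_abs_self (x - y)]
  · rw [min_eq_right hx, min_eq_right hy, sub_zero, abs_zero]
    exact abs_nonneg _

lemma aux_max0_lip (x y : ℝ) : |max x 0 - max y 0| ≤ |x - y| :=
  abs_max_sub_max_le_abs x y 0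

lemma aux_monoP (a f M g g' : ℝ) (ha : 0 ≤ a) (hf : 0 ≤ f) (haM : a ≤ M) (hfM : f ≤ M)
    (hgg : g' ≤ g) :
    M * (g' - g) ≤ (a * min g' 0 + f * max g' 0) - (a * min g 0 + f * max g 0) := by
  have h1 : min g' 0 ≤ min g 0 := min_le_min hgg le_rfl
  have h2 : max g' 0 ≤ max g 0 := max_le_max hgg le_rfl
  have e3 : M * min g' 0 + M * max g' 0 = M * g' := by rw [← mul_add, min_add_max, add_zero]
  have e4 : M * min g 0 + M * max g 0 = M * g := by rw [← mul_add, min_add_max, add_zero]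
  linarith [mul_nonneg (sub_nonneg.2 haM) (sub_nonneg.2 h1),
    mul_nonneg (sub_nonneg.2 hfM) (sub_nonneg.2 h2), e3, e4]

lemma aux_monoM (a f M g g' : ℝ) (ha : 0 ≤ a) (hf : 0 ≤ f) (haM : a ≤ M) (hfM : f ≤ M)
    (hgg : g' ≤ g) :
    M * (g' - g) ≤ (a * min g' 0 - f * max g' 0) - (a * min g 0 - f * max g 0) := by
  have h2 : max g' 0 ≤ max g 0 := max_le_max hgg le_rfl
  have e3 : a * min g' 0 + a * max g' 0 = a * g' := by rw [← mul_add, min_add_max, add_zero]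
  have e4 : a * min g 0 + a * max g 0 = a * g := by rw [← mul_add, min_add_max, add_zero]
  linarith [mul_nonneg (sub_nonneg.2 haM) (sub_nonneg.2 hgg),
    mul_nonneg ha (sub_nonneg.2 h2), mul_nonneg hf (sub_nonneg.2 h2), e3, e4]

lemma aux_lipFP (a f g1 g2 : ℝ) (ha : 0 ≤ a) (hf : 0 ≤ f) :
    |(a * min g1 0 + f * max g1 0) - (a * min g2 0 + f * max g2 0)| ≤ (a + f) * |g1 - g2| := by
  have h1 := aux_min0_lip g1 g2
  have h2 := aux_max0_lip g1 g2
  have e : (a * min g1 0 + f * max g1 0) - (a * min g2 0 + f * max g2 0)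
      = a * (min g1 0 - min g2 0) + f * (max g1 0 - max g2 0) := by ring
  rw [e]
  refine le_trans (abs_add_le _ _) ?_
  rw [abs_mul, abs_mul, abs_of_nonneg ha, abs_of_nonneg hf]
  nlinarith [mul_le_mul_of_nonneg_left h1 ha, mul_le_mul_of_nonneg_left h2 hf]

lemma aux_lipFM (a f g1 g2 : ℝ) (ha : 0 ≤ a) (hf : 0 ≤ f) :
    |(a * min g1 0 - f * max g1 0) - (a * min g2 0 - f * max g2 0)| ≤ (a + f) * |g1 - g2| := by
  have h1 := aux_min0_lip g1 g2
  have h2 := aux_max0_lip g2 g1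
  rw [abs_sub_comm g2 g1] at h2
  have e : (a * min g1 0 - f * max g1 0) - (a * min g2 0 - f * max g2 0)
      = a * (min g1 0 - min g2 0) + f * (max g2 0 - max g1 0) := by ring
  rw [e]
  refine le_trans (abs_add_le _ _) ?_
  rw [abs_mul, abs_mul, abs_of_nonneg ha, abs_of_nonneg hf]
  nlinarith [mul_le_mul_of_nonneg_left h1 ha, mul_le_mul_of_nonneg_left h2 hf]

lemma aux_sqrt_le (x y : ℝ) : Real.sqrt (x ^ 2 + y ^ 2) ≤ |x| + |y| := by
  have h : x ^ 2 + y ^ 2 ≤ (|x| + |y|) ^ 2 := by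
    nlinarith [mul_nonneg (abs_nonneg x) (abs_nonneg y), sq_abs x, sq_abs y]
  calc Real.sqrt (x ^ 2 + y ^ 2) ≤ Real.sqrt ((|x| + |y|) ^ 2) := Real.sqrt_le_sqrt h
    _ = |x| + |y| := Real.sqrt_sq (by positivity)

lemma aux_le_sqrt (x y : ℝ) : |x| ≤ Real.sqrt (x ^ 2 + y ^ 2) := by
  rw [← Real.sqrt_sq_eq_abs]
  exact Real.sqrt_le_sqrt (by nlinarith [sq_nonneg y])



lemma aux_self (knn knt ktt f wt : ℝ) (F u t : ℝ × ℝ) (h : IncSol knn knt ktt f wt F u t) :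
    IncSol knn knt ktt f u.2 F u t := by
  obtain ⟨e1, e2, h3, h4, h5, h6, _⟩ := h
  exact ⟨e1, e2, h3, h4, h5, h6, by simp⟩

lemma aux_normal (knn knt ktt f wt : ℝ) (hknn : 0 < knn) (F u t : ℝ × ℝ)
    (h : IncSol knn knt ktt f wt F u t) :
    t.1 = -max (F.1 - knt * u.2) 0 ∧ u.1 = min (F.1 - knt * u.2) 0 / knn := by
  obtain ⟨e1, _, hu1, ht1, hc, _, _⟩ := h
  rcases mul_eq_zero.mp hc with h0 | h0
  · have ht : t.1 = knt * u.2 - F.1 := by rw [h0] at e1; linarith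
    have hge : 0 ≤ F.1 - knt * u.2 := by rw [ht] at ht1; linarith
    rw [max_eq_left hge, min_eq_right hge]
    constructor
    · rw [ht]; ring
    · rw [h0]; simp
  · have hg : knn * u.1 = F.1 - knt * u.2 := by rw [h0] at e1; linarith
    have hle : F.1 - knt * u.2 ≤ 0 := by nlinarith [mul_nonneg hknn.le (neg_nonneg.2 hu1)]
    rw [max_eq_right hle, min_eq_left hle]
    constructor
    · rw [h0]; ring
    · rw [← hg, mul_div_cancel_left₀ _ (ne_of_gt hknn)]

lemma aux_t2 (knn knt ktt f wt : ℝ) (hknn : 0 < knn) (F u t : ℝ × ℝ)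
    (h : IncSol knn knt ktt f wt F u t) :
    t.2 = knt / knn * min (F.1 - knt * u.2) 0 + ktt * u.2 - F.2 := by
  have hu1 := (aux_normal knn knt ktt f wt hknn F u t h).2
  have e2 := h.2.1
  rw [hu1] at e2
  have e : knt * (min (F.1 - knt * u.2) 0 / knn) = knt / knn * min (F.1 - knt * u.2) 0 := by
    ring
  linarith [e2, e]

lemma aux_one_sided (knn knt ktt f wt : ℝ) (hknt : 0 ≤ knt) (hknn : 0 < knn)
    (hf : 0 ≤ f) (hm : 0 ≤ ktt - knt * max (knt / knn) f)
    (F u t F' u' t' : ℝ × ℝ)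
    (h : IncSol knn knt ktt f wt F u t) (h' : IncSol knn knt ktt f wt F' u' t') :
    (ktt - knt * max (knt / knn) f) * (u'.2 - u.2)
      ≤ |F'.2 - F.2| + (knt / knn + f) * |F'.1 - F.1| := by
  have ha : 0 ≤ knt / knn := div_nonneg hknt hknn.le
  have hRHS : 0 ≤ |F'.2 - F.2| + (knt / knn + f) * |F'.1 - F.1| := by positivity
  rcases le_or_gt u'.2 u.2 with hle | hlt
  · nlinarith [mul_nonneg hm (sub_nonneg.2 hle)]
  · obtain ⟨ht1, hu1⟩ := aux_normal knn knt ktt f wt hknn F u t h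
    obtain ⟨ht1', hu1'⟩ := aux_normal knn knt ktt f wt hknn F' u' t' h'
    have ht2 := aux_t2 knn knt ktt f wt hknn F u t h
    have ht2' := aux_t2 knn knt ktt f wt hknn F' u' t' h'
    have hgg : F.1 - knt * u'.2 ≤ F.1 - knt * u.2 := by
      nlinarith [mul_le_mul_of_nonneg_left hlt.le hknt]
    rcases lt_or_ge wt u'.2 with hw | hw
    · -- forward slip for the primed solution
      have hfr' := h'.2.2.2.2.2.2
      rw [abs_of_pos (by linarith : (0:ℝ) < u'.2 - wt)] at hfr'
      have ht2eq : t'.2 = f * t'.1 :=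
        mul_right_cancel₀ (sub_ne_zero.2 (ne_of_gt hw)) hfr'
      have hF2' : F'.2 = ktt * u'.2 + (knt / knn * min (F'.1 - knt * u'.2) 0
          + f * max (F'.1 - knt * u'.2) 0) := by
        rw [ht2eq, ht1'] at ht2'
        have e : f * -max (F'.1 - knt * u'.2) 0 = -(f * max (F'.1 - knt * u'.2) 0) := by ring
        linarith [ht2']
      have hb := h.2.2.2.2.2.1
      rw [ht1] at hb
      have hbb : |t.2| ≤ f * max (F.1 - knt * u.2) 0 := by
        have e : -f * -max (F.1 - knt * u.2) 0 = f * max (F.1 - knt * u.2) 0 := by ring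
        linarith [hb]
      have hF2 : F.2 ≤ ktt * u.2 + (knt / knn * min (F.1 - knt * u.2) 0
          + f * max (F.1 - knt * u.2) 0) := by
        have h5 := (abs_le.mp hbb).1
        rw [ht2] at h5
        linarith
      have hmono := aux_monoP (knt / knn) f (max (knt / knn) f)
        (F.1 - knt * u.2) (F.1 - knt * u'.2) ha hf (le_max_left _ _) (le_max_right _ _) hgg
      have hlip := aux_lipFP (knt / knn) f (F'.1 - knt * u'.2) (F.1 - knt * u'.2) ha hf
      rw [show F'.1 - knt * u'.2 - (F.1 - knt * u'.2) = F'.1 - F.1 by ring] at hlip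
      have h6 := (abs_le.mp hlip).1
      linarith [le_abs_self (F'.2 - F.2), h6, hmono, hF2, hF2']
    · -- backward slip for the unprimed solution
      have hult : u.2 < wt := lt_of_lt_of_le hlt hw
      have hfr := h.2.2.2.2.2.2
      rw [abs_of_neg (by linarith : u.2 - wt < 0)] at hfr
      have ht2eq : t.2 = -(f * t.1) := by
        apply mul_right_cancel₀ (sub_ne_zero.2 (ne_of_lt hult))
        linear_combination hfr
      have hF2 : F.2 = ktt * u.2 + (knt / knn * min (F.1 - knt * u.2) 0
          - f * max (F.1 - knt * u.2) 0) := by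
        rw [ht2eq, ht1] at ht2
        have e : -(f * -max (F.1 - knt * u.2) 0) = f * max (F.1 - knt * u.2) 0 := by ring
        linarith [ht2]
      have hb' := h'.2.2.2.2.2.1
      rw [ht1'] at hb'
      have hbb' : |t'.2| ≤ f * max (F'.1 - knt * u'.2) 0 := by
        have e : -f * -max (F'.1 - knt * u'.2) 0 = f * max (F'.1 - knt * u'.2) 0 := by ring
        linarith [hb']
      have hF2' : ktt * u'.2 + (knt / knn * min (F'.1 - knt * u'.2) 0
          - f * max (F'.1 - knt * u'.2) 0) ≤ F'.2 := by
        have h5 := (abs_le.mp hbb').2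
        rw [ht2'] at h5
        linarith
      have hmono := aux_monoM (knt / knn) f (max (knt / knn) f)
        (F.1 - knt * u.2) (F.1 - knt * u'.2) ha hf (le_max_left _ _) (le_max_right _ _) hgg
      have hlip := aux_lipFM (knt / knn) f (F'.1 - knt * u'.2) (F.1 - knt * u'.2) ha hf
      rw [show F'.1 - knt * u'.2 - (F.1 - knt * u'.2) = F'.1 - F.1 by ring] at hlip
      have h6 := (abs_le.mp hlip).1
      linarith [le_abs_self (F'.2 - F.2), h6, hmono, hF2, hF2']

lemma aux_abs (knn knt ktt f wt : ℝ) (hknt : 0 ≤ knt) (hknn : 0 < knn)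
    (hf : 0 ≤ f) (hm : 0 ≤ ktt - knt * max (knt / knn) f)
    (F u t F' u' t' : ℝ × ℝ)
    (h : IncSol knn knt ktt f wt F u t) (h' : IncSol knn knt ktt f wt F' u' t') :
    (ktt - knt * max (knt / knn) f) * |u'.2 - u.2|
      ≤ |F'.2 - F.2| + (knt / knn + f) * |F'.1 - F.1| := by
  rcases abs_cases (u'.2 - u.2) with ⟨he, _⟩ | ⟨he, _⟩
  · rw [he]; exact aux_one_sided knn knt ktt f wt hknt hknn hf hm F u t F' u' t' h h'
  · rw [he]
    have h2 := aux_one_sided knn knt ktt f wt hknt hknn hf hm F' u' t' F u t h' h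
    rw [abs_sub_comm F.2 F'.2, abs_sub_comm F.1 F'.1] at h2
    linarith [h2]

lemma aux_du1 (knn knt ktt f wt : ℝ) (hknt : 0 ≤ knt) (hknn : 0 < knn)
    (F u t F' u' t' : ℝ × ℝ)
    (h : IncSol knn knt ktt f wt F u t) (h' : IncSol knn knt ktt f wt F' u' t') :
    knn * |u'.1 - u.1| ≤ |F'.1 - F.1| + knt * |u'.2 - u.2| := by
  have hu1 := (aux_normal knn knt ktt f wt hknn F u t h).2
  have hu1' := (aux_normal knn knt ktt f wt hknn F' u' t' h').2
  have e : min (F'.1 - knt * u'.2) 0 / knn - min (F.1 - knt * u.2) 0 / knn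
      = (min (F'.1 - knt * u'.2) 0 - min (F.1 - knt * u.2) 0) / knn := by ring
  rw [hu1', hu1, e, abs_div, abs_of_pos hknn, mul_comm,
    div_mul_cancel₀ _ (ne_of_gt hknn)]
  have t1 : |(F'.1 - F.1) - knt * (u'.2 - u.2)| ≤ |F'.1 - F.1| + |knt * (u'.2 - u.2)| := by
    rw [sub_eq_add_neg]
    exact (abs_add_le _ _).trans (by rw [abs_neg])
  rw [abs_mul, abs_of_nonneg hknt] at t1
  calc |min (F'.1 - knt * u'.2) 0 - min (F.1 - knt * u.2) 0|
      ≤ |(F'.1 - knt * u'.2) - (F.1 - knt * u.2)| := aux_min0_lip _ _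
    _ = |(F'.1 - F.1) - knt * (u'.2 - u.2)| := by rw [show (F'.1 - knt * u'.2) - (F.1 - knt * u.2) = (F'.1 - F.1) - knt * (u'.2 - u.2) from by ring]
    _ ≤ |F'.1 - F.1| + knt * |u'.2 - u.2| := t1

lemma aux_m_pos (knn knt ktt f : ℝ) (hknt : 0 ≤ knt) (hknn : 0 < knn) (hktt : 0 < ktt)
    (hdet : 0 < knn * ktt - knt ^ 2) (hf : 0 ≤ f) (hsmall : f * knt / ktt < 1) :
    0 < ktt - knt * max (knt / knn) f := by
  rcases max_choice (knt / knn) f with hc | hc <;> rw [hc]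
  · have h1 : knt * (knt / knn) = knt ^ 2 / knn := by ring
    have h2 : knt ^ 2 / knn < ktt := (div_lt_iff₀ hknn).2 (by nlinarith)
    rw [h1]; linarith
  · have h2 : f * knt < ktt := by
      have := (div_lt_one hktt).1 hsmall; linarith
    nlinarith

lemma aux_assemble (m c knn knt A1 A2 B1 B2 : ℝ) (hm : 0 < m) (hc : 0 ≤ c)
    (hknn : 0 < knn) (hknt : 0 ≤ knt)
    (hB1 : 0 ≤ B1) (hB2 : 0 ≤ B2)
    (key1 : m * A2 ≤ B2 + c * B1) (key2 : knn * A1 ≤ B1 + knt * A2) :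
    A1 + A2 ≤ ((1 + knt * ((1 + c) / m)) / knn + (1 + c) / m) * (B1 + B2) := by
  have h2 : A2 ≤ (1 + c) / m * (B1 + B2) := by
    rw [div_mul_eq_mul_div, le_div_iff₀ hm]
    nlinarith [mul_nonneg hc hB2]
  have h1 : A1 ≤ (1 + knt * ((1 + c) / m)) / knn * (B1 + B2) := by
    rw [div_mul_eq_mul_div, le_div_iff₀ hknn]
    nlinarith [mul_le_mul_of_nonneg_left h2 hknt]
  nlinarith [h1, h2]

lemma aux_lip (knn knt ktt f wt : ℝ) (hknt : 0 ≤ knt) (hknn : 0 < knn) (hktt : 0 < ktt)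
    (hdet : 0 < knn * ktt - knt ^ 2) (hf : 0 ≤ f) (hsmall : f * knt / ktt < 1)
    (F u t F' u' t' : ℝ × ℝ)
    (h : IncSol knn knt ktt f wt F u t) (h' : IncSol knn knt ktt f wt F' u' t') :
    |u'.1 - u.1| + |u'.2 - u.2| ≤
      ((1 + knt * ((1 + (knt / knn + f)) / (ktt - knt * max (knt / knn) f))) / knn
        + (1 + (knt / knn + f)) / (ktt - knt * max (knt / knn) f))
       * (|F'.1 - F.1| + |F'.2 - F.2|) := by
  have hm := aux_m_pos knn knt ktt f hknt hknn hktt hdet hf hsmall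
  have hc : 0 ≤ knt / knn + f := by
    have := div_nonneg hknt hknn.le; linarith
  exact aux_assemble (ktt - knt * max (knt / knn) f) (knt / knn + f) knn knt
    |u'.1 - u.1| |u'.2 - u.2| |F'.1 - F.1| |F'.2 - F.2| hm hc hknn hknt
    (abs_nonneg _) (abs_nonneg _)
    (aux_abs knn knt ktt f wt hknt hknn hf hm.le F u t F' u' t' h h')
    (aux_du1 knn knt ktt f wt hknt hknn F u t F' u' t' h h')


/-- under `f·k_nt/k_tt < 1`, there is a constant `C > 0`
depending only on `f` and `K` such that for any finite sequence of forces
`Fᵢ` and the inductively defined incremental solutions `uᵢ`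
(with `w_t = u_{i−1,t}`, starting from an admissible `u₀`),
`|uᵢ − uᵢ₋₁| ≤ C·|Fᵢ − Fᵢ₋₁|`. -/
theorem stmt16 (knn knt ktt f : ℝ)
    (hknt : 0 ≤ knt) (hknn : 0 < knn) (hktt : 0 < ktt)
    (hdet : 0 < knn * ktt - knt ^ 2) (hf : 0 ≤ f)
    (hsmall : f * knt / ktt < 1) :
    ∃ C : ℝ, 0 < C ∧
      ∀ (Nn : ℕ) (F u t : ℕ → ℝ × ℝ),
        IncSol knn knt ktt f (u 0).2 (F 0) (u 0) (t 0) →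
        (∀ i : ℕ, i + 1 ≤ Nn →
          IncSol knn knt ktt f (u i).2 (F (i + 1)) (u (i + 1)) (t (i + 1))) →
        ∀ i : ℕ, i + 1 ≤ Nn →
          Real.sqrt (((u (i + 1)).1 - (u i).1) ^ 2
              + ((u (i + 1)).2 - (u i).2) ^ 2)
            ≤ C * Real.sqrt (((F (i + 1)).1 - (F i).1) ^ 2
              + ((F (i + 1)).2 - (F i).2) ^ 2) := by
  have hm := aux_m_pos knn knt ktt f hknt hknn hktt hdet hf hsmall
  have hC2 : 0 < (1 + (knt / knn + f)) / (ktt - knt * max (knt / knn) f) := by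
    apply div_pos _ hm
    have := div_nonneg hknt hknn.le; linarith
  have hC0 : 0 < (1 + knt * ((1 + (knt / knn + f)) / (ktt - knt * max (knt / knn) f))) / knn
      + (1 + (knt / knn + f)) / (ktt - knt * max (knt / knn) f) := by
    have h1 : 0 ≤ knt * ((1 + (knt / knn + f)) / (ktt - knt * max (knt / knn) f)) :=
      mul_nonneg hknt hC2.le
    have h2 : 0 ≤ (1 + knt * ((1 + (knt / knn + f)) / (ktt - knt * max (knt / knn) f))) / knn :=
      div_nonneg (by linarith) hknn.le
    linarith
  refine ⟨2 * ((1 + knt * ((1 + (knt / knn + f)) / (ktt - knt * max (knt / knn) f))) / knn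
      + (1 + (knt / knn + f)) / (ktt - knt * max (knt / knn) f)), by linarith, ?_⟩
  intro Nn F u t h0 hstep i hi
  have hself : IncSol knn knt ktt f (u i).2 (F i) (u i) (t i) := by
    cases i with
    | zero => exact aux_self knn knt ktt f _ _ _ _ h0
    | succ j => exact aux_self knn knt ktt f _ _ _ _ (hstep j (by omega))
  have hl := aux_lip knn knt ktt f (u i).2 hknt hknn hktt hdet hf hsmall
    (F i) (u i) (t i) (F (i + 1)) (u (i + 1)) (t (i + 1)) hself (hstep i hi)
  have s1 := aux_sqrt_le ((u (i + 1)).1 - (u i).1) ((u (i + 1)).2 - (u i).2)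
  have s2 := aux_le_sqrt ((F (i + 1)).1 - (F i).1) ((F (i + 1)).2 - (F i).2)
  have s3 : |(F (i + 1)).2 - (F i).2|
      ≤ Real.sqrt (((F (i + 1)).1 - (F i).1) ^ 2 + ((F (i + 1)).2 - (F i).2) ^ 2) := by
    have h4 := aux_le_sqrt ((F (i + 1)).2 - (F i).2) ((F (i + 1)).1 - (F i).1)
    rwa [add_comm (((F (i + 1)).2 - (F i).2) ^ 2) (((F (i + 1)).1 - (F i).1) ^ 2)] at h4
  have h5 : |(F (i + 1)).1 - (F i).1| + |(F (i + 1)).2 - (F i).2|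
      ≤ 2 * Real.sqrt (((F (i + 1)).1 - (F i).1) ^ 2 + ((F (i + 1)).2 - (F i).2) ^ 2) := by
    linarith
  nlinarith [s1, hl, mul_le_mul_of_nonneg_left h5 hC0.le]
end

section
/- Let v : [0,S] → ℝ be nondecreasing, right-continuous and bounded, v(0) = 0. For m ∈ ℕ define inductively s₀^m = 0 and s_i^m = sup{ s ∈ (s_{i−1}^m, S] : v(s) ≤ v(s_{i−1}^m) + v(S)/(m+1) }. Then this procedure terminates in at most m+1 steps (i.e. s_{n_m}^m = S with n_m ≤ m+1), and for every s ∈ [0,S], if s ∈ [s_{i−1}^m, s_i^m) then v(s) − v(s_{i−1}^m) ≤ v(S)/(m+1). -/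
open Set Filter Topology

private lemma stmt17step (S : ℝ) (v : ℝ → ℝ)
    (hmono : MonotoneOn v (Set.Icc 0 S))
    (hrc : ∀ s ∈ Set.Ico (0:ℝ) S, ContinuousWithinAt v (Set.Icc s S) s)
    (ε : ℝ) (hε : 0 < ε) (a : ℝ) (ha0 : 0 ≤ a) (haS : a < S) :
    a < sSup {x : ℝ | x ∈ Set.Ioc a S ∧ v x ≤ v a + ε} ∧
    sSup {x : ℝ | x ∈ Set.Ioc a S ∧ v x ≤ v a + ε} ≤ S ∧
    (∀ x, a ≤ x → x < sSup {x : ℝ | x ∈ Set.Ioc a S ∧ v x ≤ v a + ε} → v x ≤ v a + ε) ∧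
    (sSup {x : ℝ | x ∈ Set.Ioc a S ∧ v x ≤ v a + ε} < S →
      v a + ε ≤ v (sSup {x : ℝ | x ∈ Set.Ioc a S ∧ v x ≤ v a + ε})) := by
  set T : Set ℝ := {x : ℝ | x ∈ Set.Ioc a S ∧ v x ≤ v a + ε} with hT
  have hbdd : BddAbove T := ⟨S, fun x hx => hx.1.2⟩
  -- nonemptiness via right continuity at a
  have hne : T.Nonempty := by
    have hcont : Filter.Tendsto v (𝓝[Set.Ioc a S] a) (𝓝 (v a)) :=
      ((hrc a ⟨ha0, haS⟩).mono Set.Ioc_subset_Icc_self)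
    haveI : (𝓝[Set.Ioc a S] a).NeBot := left_nhdsWithin_Ioc_neBot haS
    have hev : ∀ᶠ x in 𝓝[Set.Ioc a S] a, v x < v a + ε :=
      hcont.eventually_lt_const (by linarith)
    have hmem : ∀ᶠ x in 𝓝[Set.Ioc a S] a, x ∈ Set.Ioc a S :=
      eventually_mem_nhdsWithin
    obtain ⟨x, hx1, hx2⟩ := (hev.and hmem).exists
    exact ⟨x, hx2, le_of_lt hx1⟩
  set b := sSup T with hb
  have hbS : b ≤ S := csSup_le hne (fun x hx => hx.1.2)
  have hab : a < b := by
    obtain ⟨t, ht⟩ := hne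
    exact lt_of_lt_of_le ht.1.1 (le_csSup hbdd ht)
  refine ⟨hab, hbS, ?_, ?_⟩
  · intro x hax hxb
    obtain ⟨t, htT, hxt⟩ := exists_lt_of_lt_csSup hne hxb
    have hxmem : x ∈ Set.Icc (0:ℝ) S := ⟨le_trans ha0 hax, le_trans (le_of_lt hxb) hbS⟩
    have htmem : t ∈ Set.Icc (0:ℝ) S := ⟨le_trans ha0 (le_of_lt htT.1.1), htT.1.2⟩
    exact le_trans (hmono hxmem htmem (le_of_lt hxt)) htT.2
  · intro hbS'
    have hb0 : 0 ≤ b := le_trans ha0 (le_of_lt hab)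
    have hcont : Filter.Tendsto v (𝓝[Set.Ioc b S] b) (𝓝 (v b)) :=
      ((hrc b ⟨hb0, hbS'⟩).mono Set.Ioc_subset_Icc_self)
    haveI : (𝓝[Set.Ioc b S] b).NeBot := left_nhdsWithin_Ioc_neBot hbS'
    have hev : ∀ᶠ x in 𝓝[Set.Ioc b S] b, v a + ε ≤ v x := by
      refine eventually_mem_nhdsWithin.mono (fun x hx => ?_)
      by_contra hlt
      push_neg at hlt
      have hxT : x ∈ T := ⟨⟨lt_trans hab hx.1, hx.2⟩, le_of_lt hlt⟩
      exact absurd (le_csSup hbdd hxT) (not_le.mpr hx.1)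
    exact ge_of_tendsto hcont hev

private noncomputable def stmt17seq (S : ℝ) (v : ℝ → ℝ) (ε : ℝ) : ℕ → ℝ
  | 0 => 0
  | (i+1) => sSup {x : ℝ | x ∈ Set.Ioc (stmt17seq S v ε i) S ∧
      v x ≤ v (stmt17seq S v ε i) + ε}

/-- for a nondecreasing, right-continuous, bounded
`v : [0,S] → ℝ` with `v(0) = 0`, the inductive subdivision
`s₀ᵐ = 0`, `sᵢᵐ = sup{ s ∈ (sᵢ₋₁ᵐ, S] : v(s) ≤ v(sᵢ₋₁ᵐ) + v(S)/(m+1) }`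
reaches `S` in at most `m+1` steps, and on each `[sᵢ₋₁ᵐ, sᵢᵐ)` the
oscillation of `v` is at most `v(S)/(m+1)`. -/
theorem stmt17 (S : ℝ) (hS : 0 < S) (v : ℝ → ℝ)
    (hmono : MonotoneOn v (Set.Icc 0 S))
    (hrc : ∀ s ∈ Set.Ico (0:ℝ) S, ContinuousWithinAt v (Set.Icc s S) s)
    (hv0 : v 0 = 0) :
    ∀ m : ℕ, ∃ n : ℕ, n ≤ m + 1 ∧ ∃ s : ℕ → ℝ,
      s 0 = 0 ∧ s n = S ∧
      (∀ i < n, s i < s (i + 1)) ∧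
      (∀ i < n, s (i + 1) =
        sSup {x : ℝ | x ∈ Set.Ioc (s i) S ∧
          v x ≤ v (s i) + v S / (m + 1)}) ∧
      (∀ i < n, ∀ x : ℝ, s i ≤ x → x < s (i + 1) →
        v x - v (s i) ≤ v S / (m + 1)) := by
  intro m
  classical
  have h0S : (0:ℝ) ∈ Set.Icc 0 S := ⟨le_refl _, le_of_lt hS⟩
  have hSS : S ∈ Set.Icc 0 S := ⟨le_of_lt hS, le_refl _⟩
  have hvS0 : 0 ≤ v S := hv0 ▸ hmono h0S hSS (le_of_lt hS)
  have hm1 : (0:ℝ) < (m:ℝ) + 1 := by positivity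
  set ε : ℝ := v S / ((m:ℝ) + 1) with hε
  have hεnn : 0 ≤ ε := div_nonneg hvS0 (le_of_lt hm1)
  rcases eq_or_lt_of_le hεnn with hε0 | hεpos
  · -- v S = 0 : v is identically 0, one step suffices
    have hvS : v S = 0 := by
      have := hε0.symm
      rw [hε, div_eq_zero_iff] at this
      rcases this with h | h
      · exact h
      · linarith
    have hvx : ∀ x ∈ Set.Icc (0:ℝ) S, v x = 0 := fun x hx =>
      le_antisymm (hvS ▸ hmono hx hSS hx.2) (hv0 ▸ hmono h0S hx hx.1)
    have hset : {x : ℝ | ((0:ℝ) < x ∧ x ≤ S) ∧ v x ≤ v 0 + ε} = Set.Ioc 0 S := by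
      ext x
      simp only [Set.mem_setOf_eq, Set.mem_Ioc, and_iff_left_iff_imp]
      intro hx
      rw [hv0, hvx x ⟨le_of_lt hx.1, hx.2⟩]
      linarith
    refine ⟨1, by omega, fun i => if i = 0 then 0 else S, by simp, by simp, ?_, ?_, ?_⟩
    · intro i hi
      interval_cases i
      simpa using hS
    · intro i hi
      interval_cases i
      norm_num
      rw [hset, csSup_Ioc hS]
    · intro i hi x hx1 hx2
      interval_cases i
      norm_num at hx1 hx2 ⊢
      rw [hv0, hvx x ⟨hx1, le_of_lt hx2⟩]
      linarith
  · -- main case ε > 0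
    set s : ℕ → ℝ := stmt17seq S v ε with hs
    have hstep := stmt17step S v hmono hrc ε hεpos
    have hsucc : ∀ i, s (i+1) = sSup {x : ℝ | x ∈ Set.Ioc (s i) S ∧ v x ≤ v (s i) + ε} := by
      intro i; rfl
    -- invariant
    have inv : ∀ i, 0 ≤ s i ∧ s i ≤ S := by
      intro i
      induction i with
      | zero => exact ⟨le_refl _, le_of_lt hS⟩
      | succ i ih =>
        rcases lt_or_eq_of_le ih.2 with hlt | heq
        · obtain ⟨h1, h2, _, _⟩ := hstep (s i) ih.1 hlt
          exact ⟨le_trans ih.1 (le_of_lt (hsucc i ▸ h1)), hsucc i ▸ h2⟩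
        · have : {x : ℝ | x ∈ Set.Ioc (s i) S ∧ v x ≤ v (s i) + ε} = ∅ := by
            rw [heq]
            ext x; simp [Set.Ioc_self]
          rw [hsucc i, this, Real.sSup_empty]
          exact ⟨le_refl _, le_of_lt hS⟩
    -- termination
    have hterm : ∃ i, i ≤ m + 1 ∧ s i = S := by
      by_contra hcon
      push_neg at hcon
      have hlt : ∀ i ≤ m + 1, s i < S := fun i hi =>
        lt_of_le_of_ne (inv i).2 (hcon i hi)
      have hgrowstep : ∀ i, i ≤ m → v (s i) + ε ≤ v (s (i+1)) := by
        intro i hi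
        obtain ⟨_, _, _, h4⟩ := hstep (s i) (inv i).1 (hlt i (by omega))
        exact hsucc i ▸ h4 (hsucc i ▸ hlt (i+1) (by omega))
      have hgrow : ∀ i ≤ m + 1, (i:ℝ) * ε ≤ v (s i) := by
        intro i hi
        induction i with
        | zero => simp [hs, stmt17seq, hv0]
        | succ i ih =>
          have h1 := ih (by omega)
          have h2 := hgrowstep i (by omega)
          push_cast
          linarith
      have hvsm1 : v (s (m+1)) ≤ v S :=
        hmono ⟨(inv (m+1)).1, (inv (m+1)).2⟩ hSS (inv (m+1)).2
      have hSε : ((m:ℝ) + 1) * ε = v S := by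
        rw [hε]; field_simp
      have h1 : ((m:ℝ)) * ε ≤ v (s m) := by
        have := hgrow m (by omega); push_cast at this ⊢; exact this
      have h2 := hgrowstep m (le_refl m)
      have hvsm : v (s m) + ε = v S := by
        have h3 := hgrow (m+1) (le_refl _)
        push_cast at h3
        linarith
      -- then S is in the set at step m, so s (m+1) = S, contradiction
      have hSmem : S ∈ {x : ℝ | x ∈ Set.Ioc (s m) S ∧ v x ≤ v (s m) + ε} :=
        ⟨⟨hlt m (by omega), le_refl _⟩, le_of_eq hvsm.symm⟩
      have : S ≤ s (m+1) := by
        rw [hsucc m]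
        exact le_csSup ⟨S, fun x hx => hx.1.2⟩ hSmem
      exact absurd this (not_le.mpr (hlt (m+1) (le_refl _)))
    have hex : ∃ i, s i = S := ⟨hterm.choose, hterm.choose_spec.2⟩
    set n := Nat.find hex with hn
    have hnle : n ≤ m + 1 := Nat.find_min' hex hterm.choose_spec.2 |>.trans hterm.choose_spec.1
    have hnS : s n = S := Nat.find_spec hex
    have hiltn : ∀ i < n, s i < S := fun i hi =>
      lt_of_le_of_ne (inv i).2 (Nat.find_min hex hi)
    refine ⟨n, hnle, s, rfl, hnS, ?_, ?_, ?_⟩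
    · intro i hi
      exact hsucc i ▸ (hstep (s i) (inv i).1 (hiltn i hi)).1
    · intro i hi
      exact hsucc i
    · intro i hi x hx1 hx2
      obtain ⟨_, _, h3, _⟩ := hstep (s i) (inv i).1 (hiltn i hi)
      have := h3 x hx1 (hsucc i ▸ hx2)
      linarith
end
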